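/- (Lemma 4.2, second bullet.) Let P ≥ 0 and define g₂ : ℝ → ℝ by g₂(B) = 1 − (1/2 + (1/2)·erf(√(B/2) − √(P/2)))². Set χ₂ = max P (((√P + √(π/2) + √((√P + √(π/2))² − 2))/2)²), where the inner √ is Real.sqrt (equal to 0 when its argument is negative). Then g₂ is convex on [χ₂, ∞) (ConvexOn ℝ (Set.Ici χ₂) g₂). -/

import Mathlib

open MeasureTheory ProbabilityTheory Real Set

noncomputable def erf (x : ℝ) : ℝ :=
  (2 / Real.sqrt Real.pi) * ∫ t in (0:ℝ)..x, Real.exp (-t^2)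

/-!
Since `1/2 + erf (√(B/2) - √(P/2)) / 2 = Φ (√B - √P)` for the standard normal distribution
function `Φ` with density `φ`, we have `g₂ B = 1 - Φ (x - t) ^ 2` with `x = √B`, `t = √P`, and
`g₂'' B = φ (x - t) / (2 x³) · (Φ (x - t) (x (x - t) + 1) - x φ (x - t))`.
For `x ≥ t` we have `Φ ≥ 1/2` and `φ ≤ 1/√(2π)`, so `g₂'' ≥ 0` as soon as
`2x ≤ √(2π) (x (x - t) + 1)`. This holds once `x` exceeds the larger root of
`x² - (t + √(π/2)) x + 1/2`, because `√(2π) · √(π/2) = π ≥ 2`.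
-/
lemma hasDerivAt_erf (x : ℝ) : HasDerivAt erf (2 / √π * exp (-x ^ 2)) x :=
  ((by fun_prop : Continuous fun t : ℝ => exp (-t ^ 2)).integral_hasStrictDerivAt 0 x
    ).hasDerivAt.const_mul _

lemma erf_nonneg {x : ℝ} (hx : 0 ≤ x) : 0 ≤ erf x :=
  mul_nonneg (by positivity) (intervalIntegral.integral_nonneg hx fun t _ => (exp_pos _).le)

noncomputable def stdNormalCdf (y : ℝ) : ℝ := 1 / 2 + 1 / 2 * erf (y / √2)

noncomputable def stdNormalPdf (y : ℝ) : ℝ := exp (-y ^ 2 / 2) / √(2 * π)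

lemma hasDerivAt_stdNormalCdf (y : ℝ) : HasDerivAt stdNormalCdf (stdNormalPdf y) y := by
  have h := (((hasDerivAt_erf (y / √2)).comp y ((hasDerivAt_id y).div_const √2)).const_mul
    (1 / 2 : ℝ)).const_add (1 / 2 : ℝ)
  refine h.congr_deriv ?_
  rw [stdNormalPdf, sqrt_mul zero_le_two, div_pow, sq_sqrt zero_le_two]
  field_simp

lemma hasDerivAt_stdNormalPdf (y : ℝ) : HasDerivAt stdNormalPdf (-y * stdNormalPdf y) y := by
  have h := ((((hasDerivAt_id y).pow 2).neg.div_const 2).exp).div_const √(2 * π)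
  refine h.congr_deriv ?_
  simp only [stdNormalPdf, Pi.neg_apply, Pi.pow_apply, id]
  ring

lemma half_le_stdNormalCdf {y : ℝ} (hy : 0 ≤ y) : 1 / 2 ≤ stdNormalCdf y := by
  have := erf_nonneg (div_nonneg hy (sqrt_nonneg 2))
  rw [stdNormalCdf]; linarith

lemma stdNormalPdf_pos (y : ℝ) : 0 < stdNormalPdf y := by
  unfold stdNormalPdf; positivity

lemma stdNormalPdf_le (y : ℝ) : stdNormalPdf y ≤ 1 / √(2 * π) := by
  unfold stdNormalPdf
  gcongr
  simp only [exp_le_one_iff]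
  nlinarith [sq_nonneg y]

noncomputable def gTwo (t B : ℝ) : ℝ := 1 - stdNormalCdf (√B - t) ^ 2

noncomputable def gTwoDeriv (t B : ℝ) : ℝ :=
  -(stdNormalCdf (√B - t) * stdNormalPdf (√B - t)) / √B

noncomputable def gTwoDeriv2 (t B : ℝ) : ℝ :=
  stdNormalPdf (√B - t) / (2 * √B ^ 3) *
    (stdNormalCdf (√B - t) * (√B * (√B - t) + 1) - √B * stdNormalPdf (√B - t))

lemma hasDerivAt_gTwo (t : ℝ) {B : ℝ} (hB : 0 < B) :
    HasDerivAt (gTwo t) (gTwoDeriv t B) B := by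
  have hx := hasDerivAt_sqrt hB.ne'
  have h := (((hasDerivAt_stdNormalCdf (√B - t)).comp B (hx.sub_const t)).pow 2).const_sub 1
  refine h.congr_deriv ?_
  have : √B ≠ 0 := (sqrt_pos.2 hB).ne'
  simp only [gTwoDeriv, Function.comp_apply]
  field_simp
  ring

lemma hasDerivAt_gTwoDeriv (t : ℝ) {B : ℝ} (hB : 0 < B) :
    HasDerivAt (gTwoDeriv t) (gTwoDeriv2 t B) B := by
  have hx := hasDerivAt_sqrt hB.ne'
  have hy := hx.sub_const t
  have h := (((hasDerivAt_stdNormalCdf (√B - t)).comp B hy).mul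
    ((hasDerivAt_stdNormalPdf (√B - t)).comp B hy)).neg.div hx (sqrt_pos.2 hB).ne'
  refine h.congr_deriv ?_
  have : √B ≠ 0 := (sqrt_pos.2 hB).ne'
  simp only [gTwoDeriv2, Function.comp_apply, Pi.neg_apply, Pi.mul_apply]
  field_simp
  ring

lemma gTwoDeriv2_nonneg {t B : ℝ} (hB : 0 < B) (ht : t ≤ √B)
    (h : 2 * √B ≤ √(2 * π) * (√B * (√B - t) + 1)) : 0 ≤ gTwoDeriv2 t B := by
  have hx := sqrt_pos.2 hB
  have hy : 0 ≤ √B - t := sub_nonneg.2 ht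
  have hΦ := half_le_stdNormalCdf hy
  have hφ := stdNormalPdf_le (√B - t)
  have hpi : 0 < √(2 * π) := by positivity
  refine mul_nonneg (div_nonneg (stdNormalPdf_pos _).le (by positivity)) (sub_nonneg.2 ?_)
  calc √B * stdNormalPdf (√B - t) ≤ √B * (1 / √(2 * π)) := by gcongr
    _ = 2 * √B / √(2 * π) / 2 := by ring
    _ ≤ (√B * (√B - t) + 1) / 2 := by gcongr; rwa [div_le_iff₀' hpi]
    _ ≤ stdNormalCdf (√B - t) * (√B * (√B - t) + 1) := by
      rw [div_eq_mul_one_div, mul_comm]; gcongr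

lemma convexOn_Ici_gTwo {t a : ℝ} (ha : 0 < a) (hta : t ≤ √a)
    (h : ∀ x, √a ≤ x → 2 * x ≤ √(2 * π) * (x * (x - t) + 1)) :
    ConvexOn ℝ (Ici a) (gTwo t) := by
  have hpos : ∀ B ∈ Ici a, 0 < B := fun B hB => ha.trans_le hB
  refine convexOn_of_hasDerivWithinAt2_nonneg (convex_Ici a)
    (fun B hB => (hasDerivAt_gTwo t (hpos B hB)).continuousAt.continuousWithinAt)
    (fun B hB => (hasDerivAt_gTwo t (hpos B (interior_subset hB))).hasDerivWithinAt)
    (fun B hB => (hasDerivAt_gTwoDeriv t (hpos B (interior_subset hB))).hasDerivWithinAt)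
    fun B hB => ?_
  have hBa : B ∈ Ici a := interior_subset hB
  have hsqrt : √a ≤ √B := sqrt_le_sqrt hBa
  exact gTwoDeriv2_nonneg (hpos B hBa) (hta.trans hsqrt) (h _ hsqrt)

lemma sq_sub_mul_add_nonneg_of_le {b d x : ℝ} (h : (b + √(b ^ 2 - d)) / 2 ≤ x) :
    0 ≤ x ^ 2 - b * x + d / 4 := by
  have : b ^ 2 - d ≤ (2 * x - b) ^ 2 :=
    (sqrt_le_left (by linarith [sqrt_nonneg (b ^ 2 - d)])).1 (by linarith)
  nlinarith

lemma two_mul_le_of_le_root {t x : ℝ} (hx : 0 ≤ x)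
    (h : (t + √(π / 2) + √((t + √(π / 2)) ^ 2 - 2)) / 2 ≤ x) :
    2 * x ≤ √(2 * π) * (x * (x - t) + 1) := by
  have hquad := sq_sub_mul_add_nonneg_of_le h
  have hπ : √(2 * π) * √(π / 2) = π := by
    rw [← sqrt_mul (by positivity), show 2 * π * (π / 2) = π ^ 2 by ring, sqrt_sq pi_pos.le]
  calc 2 * x ≤ π * x := by nlinarith [pi_gt_three]
    _ = √(2 * π) * (√(π / 2) * x) := by rw [← mul_assoc, hπ]
    _ ≤ √(2 * π) * (x * (x - t) + 1) := by gcongr; nlinarith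

theorem stmt_16_general (P : ℝ)
    (g₂ : ℝ → ℝ)
    (hg₂ : ∀ B, g₂ B = 1 - (1/2 + (1/2) * erf (Real.sqrt (B/2) - Real.sqrt (P/2)))^2)
    (χ₂ : ℝ)
    (hχ₂ : χ₂ = max P (((Real.sqrt P + Real.sqrt (Real.pi/2) +
      Real.sqrt ((Real.sqrt P + Real.sqrt (Real.pi/2))^2 - 2)) / 2)^2)) :
    ConvexOn ℝ (Set.Ici χ₂) g₂ := by
  set x₀ := (√P + √(π / 2) + √((√P + √(π / 2)) ^ 2 - 2)) / 2
  have hx₀ : 0 < x₀ := by positivity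
  have hg : g₂ = gTwo √P := funext fun B => by
    rw [hg₂, gTwo, stdNormalCdf, sub_div, sqrt_div' B zero_le_two, sqrt_div' P zero_le_two]
  rw [hg]
  refine convexOn_Ici_gTwo ?_ (sqrt_le_sqrt (hχ₂ ▸ le_max_left _ _)) fun x hx =>
    two_mul_le_of_le_root ((sqrt_nonneg _).trans hx) ?_
  · exact (pow_pos hx₀ 2).trans_le (hχ₂ ▸ le_max_right _ _)
  · calc x₀ = √(x₀ ^ 2) := (sqrt_sq hx₀.le).symm
      _ ≤ √χ₂ := sqrt_le_sqrt (hχ₂ ▸ le_max_right _ _)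
      _ ≤ x := hx

theorem stmt_16 (P : ℝ) (hP : 0 ≤ P)
    (g₂ : ℝ → ℝ)
    (hg₂ : ∀ B, g₂ B = 1 - (1/2 + (1/2) * erf (Real.sqrt (B/2) - Real.sqrt (P/2)))^2)
    (χ₂ : ℝ)
    (hχ₂ : χ₂ = max P (((Real.sqrt P + Real.sqrt (Real.pi/2) +
      Real.sqrt ((Real.sqrt P + Real.sqrt (Real.pi/2))^2 - 2)) / 2)^2)) :
    ConvexOn ℝ (Set.Ici χ₂) g₂ :=
  stmt_16_general P g₂ hg₂ χ₂ hχ₂
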